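/- Assume additionally that q := (L1 + L2) M0 < 1, where M0 = max_{t∈[0,1]} ∫₀¹ |G(t,s)| ds, and let u be the unique continuous function on [0,1] satisfying u(t) = g(t) + ∫₀¹ G(t,s) f(s, u(s), u(φ(s))) ds for all t ∈ [0,1]. Set p_k = q^k/(1 − q) and d = max_{t∈[0,1]} |ψ_1(t) − ψ_0(t)|. Then for every fixed integer k ≥ 0 there exists a constant C > 0 such that for every integer N ≥ 1, with h = 1/N, one has max_{0 ≤ i ≤ N} |U_k(t_i) − u(t_i)| ≤ M0 p_k d + C h². -/

import Mathlib

open Set MeasureTheory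

/-- The Green function of the problem `u''' = ψ`, `u(0) = u'(0) = u'(1) = 0` on `[0,1]`. -/
noncomputable def G01 (t s : ℝ) : ℝ :=
  if s ≤ t then s / 2 * (t ^ 2 - 2 * t + s) else t ^ 2 / 2 * (s - 1)

/-- The quadratic polynomial with `g(0) = b1`, `g'(0) = b2`, `g'(1) = b3`. -/
noncomputable def gq (b1 b2 b3 t : ℝ) : ℝ := b1 + b2 * t + (b3 - b2) / 2 * t ^ 2

/-- Trapezoidal weights: `ρ_0 = ρ_N = 1/2` and `ρ_j = 1` for `1 ≤ j ≤ N − 1`. -/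
noncomputable def trapWeight (N j : ℕ) : ℝ := if j = 0 ∨ j = N then 1 / 2 else 1

/-- Continuous iteration: `ψ₀(t) = f(t,0,0)`, `ψ_{k+1}(t) = f(t, u_k(t), v_k(t))`, where
`u_k(t) = g(t) + ∫₀¹ G(t,s) ψ_k(s) ds` and `v_k(t) = u_k(φ(t))`. -/
noncomputable def psiC (f : ℝ → ℝ → ℝ → ℝ) (φ : ℝ → ℝ) (b1 b2 b3 : ℝ) : ℕ → ℝ → ℝ
  | 0 => fun t => f t 0 0
  | k + 1 => fun t =>
      f t (gq b1 b2 b3 t + ∫ s in (0:ℝ)..1, G01 t s * psiC f φ b1 b2 b3 k s)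
        (gq b1 b2 b3 (φ t) + ∫ s in (0:ℝ)..1, G01 (φ t) s * psiC f φ b1 b2 b3 k s)

/-- `u_k(t) = g(t) + ∫₀¹ G(t,s) ψ_k(s) ds`. -/
noncomputable def uC (f : ℝ → ℝ → ℝ → ℝ) (φ : ℝ → ℝ) (b1 b2 b3 : ℝ) (k : ℕ) (t : ℝ) : ℝ :=
  gq b1 b2 b3 t + ∫ s in (0:ℝ)..1, G01 t s * psiC f φ b1 b2 b3 k s

/-- `v_k(t) = u_k(φ(t))`. -/
noncomputable def vC (f : ℝ → ℝ → ℝ → ℝ) (φ : ℝ → ℝ) (b1 b2 b3 : ℝ) (k : ℕ) (t : ℝ) : ℝ :=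
  uC f φ b1 b2 b3 k (φ t)

/-- Discrete iteration: `Ψ₀(t_i) = f(t_i,0,0)`,
`Ψ_{k+1}(t_i) = f(t_i, U_k(t_i), V_k(t_i))`, where `U_k`, `V_k` are trapezoidal
approximations of `u_k`, `v_k` on the uniform grid `t_i = i/N`. -/
noncomputable def PsiD (f : ℝ → ℝ → ℝ → ℝ) (φ : ℝ → ℝ) (b1 b2 b3 : ℝ) (N : ℕ) :
    ℕ → ℕ → ℝ
  | 0 => fun i => f ((i : ℝ) / N) 0 0
  | k + 1 => fun i =>
      f ((i : ℝ) / N)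
        (gq b1 b2 b3 ((i : ℝ) / N) + ∑ j ∈ Finset.range (N + 1),
          (1 / (N:ℝ)) * trapWeight N j * G01 ((i : ℝ) / N) ((j : ℝ) / N) *
            PsiD f φ b1 b2 b3 N k j)
        (gq b1 b2 b3 (φ ((i : ℝ) / N)) + ∑ j ∈ Finset.range (N + 1),
          (1 / (N:ℝ)) * trapWeight N j * G01 (φ ((i : ℝ) / N)) ((j : ℝ) / N) *
            PsiD f φ b1 b2 b3 N k j)

/-- `U_k(t_i) = g(t_i) + Σ_j h ρ_j G(t_i, t_j) Ψ_k(t_j)`. -/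
noncomputable def UD (f : ℝ → ℝ → ℝ → ℝ) (φ : ℝ → ℝ) (b1 b2 b3 : ℝ) (N k i : ℕ) : ℝ :=
  gq b1 b2 b3 ((i : ℝ) / N) + ∑ j ∈ Finset.range (N + 1),
    (1 / (N:ℝ)) * trapWeight N j * G01 ((i : ℝ) / N) ((j : ℝ) / N) * PsiD f φ b1 b2 b3 N k j

/-- `V_k(t_i) = g(ξ_i) + Σ_j h ρ_j G(ξ_i, t_j) Ψ_k(t_j)`, with `ξ_i = φ(t_i)`. -/
noncomputable def VD (f : ℝ → ℝ → ℝ → ℝ) (φ : ℝ → ℝ) (b1 b2 b3 : ℝ) (N k i : ℕ) : ℝ :=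
  gq b1 b2 b3 (φ ((i : ℝ) / N)) + ∑ j ∈ Finset.range (N + 1),
    (1 / (N:ℝ)) * trapWeight N j * G01 (φ ((i : ℝ) / N)) ((j : ℝ) / N) *
      PsiD f φ b1 b2 b3 N k j

/-!
Split `|U_k(t_i) - u(t_i)| ≤ |U_k(t_i) - u_k(t_i)| + |u_k(t_i) - u(t_i)|`.

The second term is the error of the continuous iteration. One step `ψ ↦ f(·, u_ψ, u_ψ ∘ φ)`,
`u_ψ = g + ∫ G(·, s) ψ(s) ds`, is a contraction with constant `q = (L1 + L2) M0` in the sup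
norm on `[0,1]`; the first step moves `ψ_0` by `d`, so `‖ψ_0 - ψ*‖ ≤ d / (1 - q)`,
`‖ψ_k - ψ*‖ ≤ q^k d / (1 - q)`, and integrating against `G` costs one more factor `M0`.

The first term is a quadrature error. The Green operator maps continuous functions to `C²`
ones, so every `ψ_k` is `C²`. The kernel `G(t, ·)` has a kink at `s = t`, but
`G(t, s) = t²(s - 1)/2 + ((t - s)⁺)²/2`, so `G(t, ·) ψ_k` is still `C¹` with Lipschitz
derivative, which is all the `O(h²)` bound for the composite trapezoidal rule needs, uniformly
in `t`. Induction on `k`, through the Lipschitz bound on `f`, shows `|Ψ_k(t_j) - ψ_k(t_j)| = O(h²)`.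
-/

lemma G01_eq_sq_max (t s : ℝ) : G01 t s = t ^ 2 / 2 * (s - 1) + max (t - s) 0 ^ 2 / 2 := by
  unfold G01
  split_ifs with h
  · rw [max_eq_left (sub_nonneg.2 h)]; ring
  · rw [max_eq_right (by linarith)]; ring

lemma hasDerivAt_max_zero_sq (x : ℝ) : HasDerivAt (fun y : ℝ => max y 0 ^ 2) (2 * max x 0) x := by
  refine hasDerivAt_of_hasDerivAt_of_ne' (f := fun y : ℝ => max y 0 ^ 2) (g := fun y => 2 * max y 0)
    (x := 0) (fun y hy => ?_) (by fun_prop) (by fun_prop) x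
  rcases hy.lt_or_gt with hy | hy
  · rw [max_eq_right hy.le, mul_zero]
    refine (hasDerivAt_const y 0).congr_of_eventuallyEq ?_
    filter_upwards [Iio_mem_nhds hy] with z hz
    simp [max_eq_right (mem_Iio.1 hz).le]
  · rw [max_eq_left hy.le]
    refine (hasDerivAt_pow 2 y).congr_of_eventuallyEq ?_ |>.congr_deriv (by ring)
    filter_upwards [Ioi_mem_nhds hy] with z hz
    simp [max_eq_left (mem_Ioi.1 hz).le]

noncomputable def dG01 (t s : ℝ) : ℝ := t ^ 2 / 2 - max (t - s) 0

lemma hasDerivAt_G01 (t s : ℝ) : HasDerivAt (G01 t) (dG01 t s) s := by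
  rw [show G01 t = fun x => t ^ 2 / 2 * (x - 1) + max (t - x) 0 ^ 2 / 2 from
    funext (G01_eq_sq_max t)]
  have h1 := ((hasDerivAt_id s).sub_const 1).const_mul (t ^ 2 / 2)
  have h2 := ((hasDerivAt_max_zero_sq (t - s)).comp s ((hasDerivAt_id s).const_sub t)).div_const 2
  exact (h1.add h2).congr_deriv (by simp only [dG01]; ring)

lemma continuous_G01 (t : ℝ) : Continuous (G01 t) :=
  continuous_iff_continuousAt.2 fun s => (hasDerivAt_G01 t s).continuousAt

lemma abs_G01_le_one {t s : ℝ} (ht : t ∈ Icc (0:ℝ) 1) (hs : s ∈ Icc (0:ℝ) 1) : |G01 t s| ≤ 1 := by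
  obtain ⟨ht0, ht1⟩ := ht
  obtain ⟨hs0, hs1⟩ := hs
  have h0 : 0 ≤ max (t - s) 0 := le_max_right _ _
  have h1 : max (t - s) 0 ≤ 1 := max_le (by linarith) zero_le_one
  rw [G01_eq_sq_max, abs_le]
  constructor <;> nlinarith

lemma abs_dG01_le_one {t s : ℝ} (ht : t ∈ Icc (0:ℝ) 1) (hs : s ∈ Icc (0:ℝ) 1) :
    |dG01 t s| ≤ 1 := by
  obtain ⟨ht0, ht1⟩ := ht
  have h0 : 0 ≤ max (t - s) 0 := le_max_right _ _
  have h1 : max (t - s) 0 ≤ 1 := max_le (by linarith [hs.1]) zero_le_one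
  rw [dG01, abs_le]
  constructor <;> nlinarith

lemma abs_dG01_sub_le (t x y : ℝ) : |dG01 t x - dG01 t y| ≤ |x - y| := by
  rw [dG01, dG01, sub_sub_sub_cancel_left, abs_sub_comm]
  exact (abs_max_sub_max_le_abs _ _ 0).trans_eq (by rw [sub_sub_sub_cancel_left, abs_sub_comm])

lemma abs_G01_sub_le {t x y : ℝ} (ht : t ∈ Icc (0:ℝ) 1) (hx : x ∈ Icc (0:ℝ) 1)
    (hy : y ∈ Icc (0:ℝ) 1) : |G01 t x - G01 t y| ≤ |x - y| := by
  simpa only [Real.norm_eq_abs, one_mul] using Convex.norm_image_sub_le_of_norm_hasDerivWithin_le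
    (fun s _ => (hasDerivAt_G01 t s).hasDerivWithinAt)
    (fun s hs => (abs_dG01_le_one ht hs).trans_eq rfl) (convex_Icc 0 1) hy hx

lemma abs_trapezoidal_error_one_le {F F' : ℝ → ℝ} {a b K : ℝ} (hab : a ≤ b)
    (hF : ∀ x ∈ Icc a b, HasDerivWithinAt F (F' x) (Icc a b) x)
    (hF' : ∀ x ∈ Icc a b, ∀ y ∈ Icc a b, |F' x - F' y| ≤ K * |x - y|) :
    |trapezoidal_error F 1 a b| ≤ K * (b - a) ^ 3 := by
  rcases hab.eq_or_lt with rfl | hlt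
  · simp [trapezoidal_error_eq]
  have ha : a ∈ Icc a b := left_mem_Icc.2 hab
  have hb : b ∈ Icc a b := right_mem_Icc.2 hab
  have hK : 0 ≤ K := by
    have h := (abs_nonneg _).trans (hF' b hb a ha)
    rw [abs_of_pos (sub_pos.2 hlt)] at h
    exact nonneg_of_mul_nonneg_left h (sub_pos.2 hlt)
  obtain ⟨ξ, hξ, hslope⟩ := exists_hasDerivAt_eq_slope F F' hlt
    (fun x hx => (hF x hx).continuousWithinAt)
    (fun x hx => (hF x (Ioo_subset_Icc_self hx)).hasDerivAt (Icc_mem_nhds hx.1 hx.2))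
  set c := (F b - F a) / (b - a)
  -- `D` is `F` minus its chord, whose integral is the trapezoid
  set D : ℝ → ℝ := fun x => F x - (F a + c * (x - a))
  have hD : ∀ x ∈ Icc a b, HasDerivWithinAt D (F' x - c) (Icc a b) x := fun x hx =>
    (hF x hx).sub ((((hasDerivAt_id x).sub_const a).const_mul c).const_add (F a)
      |>.hasDerivWithinAt.congr_deriv (by simp))
  have hD' : ∀ x ∈ Icc a b, ‖F' x - c‖ ≤ K * (b - a) := fun x hx => by
    rw [Real.norm_eq_abs, ← hslope]
    refine (hF' x hx ξ (Ioo_subset_Icc_self hξ)).trans (mul_le_mul_of_nonneg_left ?_ hK)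
    rw [abs_le]; constructor <;> linarith [hx.1, hx.2, hξ.1, hξ.2]
  have hDbound : ∀ x ∈ uIoc a b, ‖D x‖ ≤ K * (b - a) ^ 2 := fun x hx => by
    have hx' : x ∈ Icc a b := ⟨(uIoc_of_le hab ▸ hx).1.le, (uIoc_of_le hab ▸ hx).2⟩
    have h := Convex.norm_image_sub_le_of_norm_hasDerivWithin_le hD hD' (convex_Icc a b) ha hx'
    simp only [D, sub_self, add_zero, mul_zero, sub_zero, Real.norm_eq_abs] at h ⊢
    calc _ ≤ K * (b - a) * |x - a| := h
      _ ≤ K * (b - a) * (b - a) := by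
        gcongr
        rw [abs_of_nonneg (by linarith [hx'.1])]
        linarith [hx'.2]
      _ = K * (b - a) ^ 2 := by ring
  have hFi : IntervalIntegrable F volume a b :=
    ContinuousOn.intervalIntegrable_of_Icc hab fun x hx => (hF x hx).continuousWithinAt
  have hchord : ∫ x in a..b, (F a + c * (x - a)) = (b - a) / 2 * (F a + F b) := by
    have hi : IntervalIntegrable (fun x => c * (x - a)) volume a b :=
      Continuous.intervalIntegrable (by fun_prop) a b
    rw [intervalIntegral.integral_add intervalIntegrable_const hi]
    simp only [intervalIntegral.integral_const, smul_eq_mul, intervalIntegral.integral_const_mul,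
      intervalIntegral.intervalIntegrable_id, intervalIntegrable_const,
      intervalIntegral.integral_sub, integral_id, c]
    field_simp
    ring
  have herr : trapezoidal_error F 1 a b = -∫ x in a..b, D x := by
    rw [trapezoidal_error, trapezoidal_integral_one, ← hchord,
      intervalIntegral.integral_sub hFi (Continuous.intervalIntegrable (by fun_prop) a b)]
    ring
  rw [herr, abs_neg, ← Real.norm_eq_abs]
  calc _ ≤ K * (b - a) ^ 2 * |b - a| := intervalIntegral.norm_integral_le_of_norm_le_const hDbound
    _ = K * (b - a) ^ 3 := by rw [abs_of_pos (sub_pos.2 hlt)]; ring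

lemma abs_trapezoidal_error_le_of_lipschitz_deriv {F F' : ℝ → ℝ} {a b K : ℝ} (hab : a ≤ b)
    {N : ℕ} (hN : 0 < N) (hF : ∀ x ∈ Icc a b, HasDerivWithinAt F (F' x) (Icc a b) x)
    (hF' : ∀ x ∈ Icc a b, ∀ y ∈ Icc a b, |F' x - F' y| ≤ K * |x - y|) :
    |trapezoidal_error F N a b| ≤ K * (b - a) ^ 3 / N ^ 2 := by
  set h := (b - a) / N
  have hNpos : (0 : ℝ) < N := Nat.cast_pos.2 hN
  have hh : 0 ≤ h := div_nonneg (sub_nonneg.2 hab) hNpos.le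
  have hb : a + N * h = b := by simp only [h]; field_simp; ring
  have hsplit : trapezoidal_error F N a b =
      ∑ i ∈ Finset.range N, trapezoidal_error F 1 (a + i * h) (a + (i + 1) * h) := by
    have hFi : IntervalIntegrable F volume a (a + N * h) := hb ▸
      ContinuousOn.intervalIntegrable_of_Icc hab fun x hx => (hF x hx).continuousWithinAt
    rw [sum_trapezoidal_error_adjacent_intervals hN hFi, hb]
  have hpiece : ∀ i ∈ Finset.range N,
      |trapezoidal_error F 1 (a + i * h) (a + (i + 1) * h)| ≤ K * h ^ 3 := by
    intro i hi
    have hi' : (i : ℝ) + 1 ≤ N := by exact_mod_cast Finset.mem_range.1 hi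
    have hsub : Icc (a + i * h) (a + (i + 1) * h) ⊆ Icc a b := by
      rw [← hb]
      exact Icc_subset_Icc (by nlinarith [i.cast_nonneg (α := ℝ)]) (by nlinarith)
    have hle : a + i * h ≤ a + (i + 1) * h := by nlinarith
    convert abs_trapezoidal_error_one_le hle (fun x hx => (hF x (hsub hx)).mono hsub)
      (fun x hx y hy => hF' x (hsub hx) y (hsub hy)) using 2
    ring
  calc _ ≤ ∑ i ∈ Finset.range N, K * h ^ 3 := by
        rw [hsplit]; exact (Finset.abs_sum_le_sum_abs _ _).trans (Finset.sum_le_sum hpiece)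
    _ = K * (b - a) ^ 3 / N ^ 2 := by
        rw [Finset.sum_const, Finset.card_range, nsmul_eq_mul]
        simp only [h]
        field_simp

/-- The composite trapezoidal rule on `[0,1]`, applied to values `F j` at the nodes `j / N`. -/
noncomputable def trapSum (N : ℕ) (F : ℕ → ℝ) : ℝ :=
  ∑ j ∈ Finset.range (N + 1), 1 / (N : ℝ) * trapWeight N j * F j

lemma trapSum_eq_trapezoidal_integral (F : ℝ → ℝ) {N : ℕ} (hN : 0 < N) :
    trapSum N (fun j => F (j / N)) = trapezoidal_integral F N 0 1 := by
  obtain ⟨n, rfl⟩ := Nat.exists_eq_add_of_lt hN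
  rw [trapSum, Finset.sum_range_succ, Finset.sum_range_succ', trapezoidal_integral]
  simp only [zero_add, Nat.cast_add, Nat.cast_one, one_div, trapWeight, Nat.add_eq_zero_iff,
    one_ne_zero, and_false, Nat.add_right_cancel_iff, false_or, mul_ite, mul_one, ite_mul,
    Nat.right_eq_add, or_false, ↓reduceIte, CharP.cast_eq_zero, zero_div,
    or_true, sub_zero, add_tsub_cancel_right]
  rw [Finset.sum_congr rfl fun x hx => if_neg (Finset.mem_range.1 hx).ne, ← Finset.mul_sum,
    div_self (by positivity)]
  ring

lemma trapSum_sub (N : ℕ) (F G : ℕ → ℝ) :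
    trapSum N F - trapSum N G = trapSum N (fun j => F j - G j) := by
  simp only [trapSum, ← Finset.sum_sub_distrib, mul_sub]

lemma abs_trapSum_le {N : ℕ} (hN : 0 < N) {F : ℕ → ℝ} {B : ℝ} (hF : ∀ j ≤ N, |F j| ≤ B) :
    |trapSum N F| ≤ B := by
  have hw : ∀ j, 0 ≤ 1 / (N : ℝ) * trapWeight N j := fun j => by
    unfold trapWeight; split_ifs <;> positivity
  calc |trapSum N F| ≤ trapSum N (fun _ => B) := by
        refine (Finset.abs_sum_le_sum_abs _ _).trans (Finset.sum_le_sum fun j hj => ?_)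
        rw [abs_mul, abs_of_nonneg (hw j)]
        exact mul_le_mul_of_nonneg_left (hF j (Nat.lt_succ_iff.1 (Finset.mem_range.1 hj))) (hw j)
    _ = B := by
        refine (trapSum_eq_trapezoidal_integral (fun _ => B) hN).trans ?_
        obtain ⟨n, rfl⟩ := Nat.exists_eq_add_of_lt hN
        simp only [trapezoidal_integral, sub_zero, zero_add, Nat.cast_add, Nat.cast_one, one_div,
          add_self_div_two, add_tsub_cancel_right, Finset.sum_const, Finset.card_range,
          nsmul_eq_mul]
        field_simp
        ring

lemma exists_bounds_of_contDiffOn_two {ψ : ℝ → ℝ} {a b : ℝ} (hab : a < b)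
    (hψ : ContDiffOn ℝ 2 ψ (Icc a b)) :
    ∃ ψ' : ℝ → ℝ, ∃ B : ℝ, (∀ x ∈ Icc a b, HasDerivWithinAt ψ (ψ' x) (Icc a b) x) ∧
      (∀ x ∈ Icc a b, |ψ x| ≤ B) ∧ (∀ x ∈ Icc a b, |ψ' x| ≤ B) ∧
      (∀ x ∈ Icc a b, ∀ y ∈ Icc a b, |ψ x - ψ y| ≤ B * |x - y|) ∧
      (∀ x ∈ Icc a b, ∀ y ∈ Icc a b, |ψ' x - ψ' y| ≤ B * |x - y|) := by
  have hU : UniqueDiffOn ℝ (Icc a b) := uniqueDiffOn_Icc hab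
  have hψ' : ContDiffOn ℝ 1 (derivWithin ψ (Icc a b)) (Icc a b) :=
    hψ.derivWithin hU (by norm_num)
  have hψ'' : ContinuousOn (derivWithin (derivWithin ψ (Icc a b)) (Icc a b)) (Icc a b) :=
    (hψ'.derivWithin hU (m := 0) le_rfl).continuousOn
  have hd : ∀ x ∈ Icc a b, HasDerivWithinAt ψ (derivWithin ψ (Icc a b) x) (Icc a b) x :=
    fun x hx => (hψ.differentiableOn (by norm_num) x hx).hasDerivWithinAt
  have hd' : ∀ x ∈ Icc a b, HasDerivWithinAt (derivWithin ψ (Icc a b))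
      (derivWithin (derivWithin ψ (Icc a b)) (Icc a b) x) (Icc a b) x :=
    fun x hx => (hψ'.differentiableOn one_ne_zero x hx).hasDerivWithinAt
  obtain ⟨B₀, hB₀⟩ := isCompact_Icc.exists_bound_of_continuousOn hψ.continuousOn
  obtain ⟨B₁, hB₁⟩ := isCompact_Icc.exists_bound_of_continuousOn hψ'.continuousOn
  obtain ⟨B₂, hB₂⟩ := isCompact_Icc.exists_bound_of_continuousOn hψ''
  set B := max (max B₀ B₁) B₂
  have hB₁' : ∀ x ∈ Icc a b, ‖derivWithin ψ (Icc a b) x‖ ≤ B := fun x hx =>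
    (hB₁ x hx).trans ((le_max_right _ _).trans (le_max_left _ _))
  have hB₂' : ∀ x ∈ Icc a b, ‖derivWithin (derivWithin ψ (Icc a b)) (Icc a b) x‖ ≤ B :=
    fun x hx => (hB₂ x hx).trans (le_max_right _ _)
  refine ⟨derivWithin ψ (Icc a b), B, hd,
    fun x hx => (hB₀ x hx).trans ((le_max_left _ _).trans (le_max_left _ _)), hB₁',
    fun x hx y hy => ?_, fun x hx y hy => ?_⟩
  · simpa only [Real.norm_eq_abs] using
      Convex.norm_image_sub_le_of_norm_hasDerivWithin_le hd hB₁' (convex_Icc a b) hy hx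
  · simpa only [Real.norm_eq_abs] using
      Convex.norm_image_sub_le_of_norm_hasDerivWithin_le hd' hB₂' (convex_Icc a b) hy hx

lemma abs_mul_sub_mul_le (a₁ a₂ b₁ b₂ : ℝ) :
    |a₁ * b₁ - a₂ * b₂| ≤ |a₁ - a₂| * |b₁| + |a₂| * |b₁ - b₂| := by
  rw [← abs_mul, ← abs_mul]
  exact (abs_add_le _ _).trans_eq' (by ring_nf)

lemma exists_abs_trapSum_G01_mul_sub_integral_le {ψ : ℝ → ℝ}
    (hψ : ContDiffOn ℝ 2 ψ (Icc 0 1)) :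
    ∃ C : ℝ, ∀ N : ℕ, 0 < N → ∀ t ∈ Icc (0:ℝ) 1,
      |trapSum N (fun j => G01 t (j / N) * ψ (j / N)) - ∫ s in (0:ℝ)..1, G01 t s * ψ s|
        ≤ C * (1 / N) ^ 2 := by
  obtain ⟨ψ', B, hd, hB, hB', hlip, hlip'⟩ := exists_bounds_of_contDiffOn_two zero_lt_one hψ
  refine ⟨4 * B, fun N hN t ht => ?_⟩
  have hF : ∀ x ∈ Icc (0:ℝ) 1, HasDerivWithinAt (fun s => G01 t s * ψ s)
      (dG01 t x * ψ x + G01 t x * ψ' x) (Icc 0 1) x := fun x hx =>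
    (hasDerivAt_G01 t x).hasDerivWithinAt.mul (hd x hx)
  have hF' : ∀ x ∈ Icc (0:ℝ) 1, ∀ y ∈ Icc (0:ℝ) 1,
      |(dG01 t x * ψ x + G01 t x * ψ' x) - (dG01 t y * ψ y + G01 t y * ψ' y)|
        ≤ 4 * B * |x - y| := fun x hx y hy => by
    have hxy := abs_nonneg (x - y)
    have e₁ : |dG01 t x - dG01 t y| * |ψ x| ≤ |x - y| * B :=
      mul_le_mul (abs_dG01_sub_le t x y) (hB x hx) (abs_nonneg _) (by positivity)
    have e₂ : |dG01 t y| * |ψ x - ψ y| ≤ 1 * (B * |x - y|) :=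
      mul_le_mul (abs_dG01_le_one ht hy) (hlip x hx y hy) (abs_nonneg _) zero_le_one
    have e₃ : |G01 t x - G01 t y| * |ψ' x| ≤ |x - y| * B :=
      mul_le_mul (abs_G01_sub_le ht hx hy) (hB' x hx) (abs_nonneg _) (by positivity)
    have e₄ : |G01 t y| * |ψ' x - ψ' y| ≤ 1 * (B * |x - y|) :=
      mul_le_mul (abs_G01_le_one ht hy) (hlip' x hx y hy) (abs_nonneg _) zero_le_one
    calc _ ≤ |dG01 t x * ψ x - dG01 t y * ψ y| + |G01 t x * ψ' x - G01 t y * ψ' y| := by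
          rw [add_sub_add_comm]; exact abs_add_le _ _
      _ ≤ 4 * B * |x - y| := by
          linarith [abs_mul_sub_mul_le (dG01 t x) (dG01 t y) (ψ x) (ψ y),
            abs_mul_sub_mul_le (G01 t x) (G01 t y) (ψ' x) (ψ' y)]
  have h := abs_trapezoidal_error_le_of_lipschitz_deriv zero_le_one hN hF hF'
  rw [trapezoidal_error, ← trapSum_eq_trapezoidal_integral _ hN] at h
  convert h using 1
  ring

lemma contDiff_succ_of_hasDerivAt {f f' : ℝ → ℝ} {n : ℕ} (hf : ∀ x, HasDerivAt f (f' x) x)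
    (hf' : ContDiff ℝ n f') : ContDiff ℝ (n + 1) f := by
  refine contDiff_succ_iff_deriv.2 ⟨fun x => (hf x).differentiableAt, by simp, ?_⟩
  rwa [funext fun x => (hf x).deriv]

lemma integral_G01_mul_eq {g : ℝ → ℝ} (hg : Continuous g) {t : ℝ} (ht : t ∈ Icc (0:ℝ) 1) :
    ∫ s in (0:ℝ)..1, G01 t s * g s =
      (t ^ 2 - 2 * t) / 2 * (∫ s in (0:ℝ)..t, s * g s) + (∫ s in (0:ℝ)..t, s ^ 2 * g s) / 2
        + t ^ 2 / 2 * ((∫ s in (0:ℝ)..1, (s - 1) * g s) - ∫ s in (0:ℝ)..t, (s - 1) * g s) := by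
  have hi : ∀ p : ℝ → ℝ, Continuous p → ∀ a b : ℝ,
      IntervalIntegrable (fun s => p s * g s) volume a b :=
    fun p hp a b => (hp.mul hg).intervalIntegrable a b
  have hleft : ∫ s in (0:ℝ)..t, G01 t s * g s =
      ∫ s in (0:ℝ)..t, ((t ^ 2 - 2 * t) / 2 * (s * g s) + 1 / 2 * (s ^ 2 * g s)) := by
    refine intervalIntegral.integral_congr fun s hs => ?_
    rw [uIcc_of_le ht.1] at hs
    simp only [G01, if_pos hs.2]
    ring
  have hright : ∫ s in t..1, G01 t s * g s = ∫ s in t..1, t ^ 2 / 2 * ((s - 1) * g s) := by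
    refine intervalIntegral.integral_congr fun s hs => ?_
    rw [uIcc_of_le ht.2] at hs
    simp only [G01_eq_sq_max, max_eq_right (sub_nonpos.2 hs.1)]
    ring
  rw [← intervalIntegral.integral_add_adjacent_intervals (b := t)
      (hi _ (continuous_G01 t) _ _) (hi _ (continuous_G01 t) _ _), hleft, hright,
    intervalIntegral.integral_add ((hi _ (by fun_prop) _ _).const_mul _)
      ((hi _ (by fun_prop) _ _).const_mul _),
    intervalIntegral.integral_const_mul, intervalIntegral.integral_const_mul,
    intervalIntegral.integral_const_mul,
    intervalIntegral.integral_interval_sub_left (hi _ (by fun_prop) _ _) (hi _ (by fun_prop) _ _)]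
  ring

lemma contDiff_two_integral_G01_mul_formula {g : ℝ → ℝ} (hg : Continuous g) :
    ContDiff ℝ 2 fun t =>
      (t ^ 2 - 2 * t) / 2 * (∫ s in (0:ℝ)..t, s * g s) + (∫ s in (0:ℝ)..t, s ^ 2 * g s) / 2
        + t ^ 2 / 2 * ((∫ s in (0:ℝ)..1, (s - 1) * g s) - ∫ s in (0:ℝ)..t, (s - 1) * g s) := by
  have hP : ∀ p : ℝ → ℝ, Continuous p → ∀ t : ℝ,
      HasDerivAt (fun t => ∫ s in (0:ℝ)..t, p s * g s) (p t * g t) t :=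
    fun p hp t => ((hp.mul hg).integral_hasStrictDerivAt 0 t).hasDerivAt
  have h₁ := hP (fun s => s) continuous_id
  have h₂ := hP (fun s => s ^ 2) (by fun_prop)
  have h₃ := hP (fun s => s - 1) (by fun_prop)
  set A₁ := fun t => ∫ s in (0:ℝ)..t, s * g s
  set A₃ := fun t => ∫ s in (0:ℝ)..t, (s - 1) * g s
  have hA₁ : Continuous A₁ := continuous_iff_continuousAt.2 fun t => (h₁ t).continuousAt
  have hA₃ : Continuous A₃ := continuous_iff_continuousAt.2 fun t => (h₃ t).continuousAt
  -- the `g t` terms cancel in both derivatives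
  have hd₁ : ∀ t : ℝ, HasDerivAt (fun t => (t - 1) * A₁ t + t * (A₃ 1 - A₃ t))
      (A₁ t + (A₃ 1 - A₃ t)) t := fun t => by
    have h := (((hasDerivAt_id t).sub_const 1).mul (h₁ t)).add
      ((hasDerivAt_id t).mul ((h₃ t).const_sub (A₃ 1)))
    exact h.congr_deriv (by simp only [id]; ring)
  have hd₀ : ∀ t : ℝ, HasDerivAt (fun t => (t ^ 2 - 2 * t) / 2 * A₁ t
      + (∫ s in (0:ℝ)..t, s ^ 2 * g s) / 2 + t ^ 2 / 2 * (A₃ 1 - A₃ t))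
      ((t - 1) * A₁ t + t * (A₃ 1 - A₃ t)) t := fun t => by
    have hq : HasDerivAt (fun t : ℝ => (t ^ 2 - 2 * t) / 2) (t - 1) t :=
      (((hasDerivAt_pow 2 t).sub ((hasDerivAt_id t).const_mul 2)).div_const 2).congr_deriv
        (by push_cast; ring)
    have hr : HasDerivAt (fun t : ℝ => t ^ 2 / 2) t t :=
      ((hasDerivAt_pow 2 t).div_const 2).congr_deriv (by ring)
    have h := ((hq.mul (h₁ t)).add ((h₂ t).div_const 2)).add (hr.mul ((h₃ t).const_sub (A₃ 1)))
    exact h.congr_deriv (by ring)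
  exact contDiff_succ_of_hasDerivAt (n := 1) hd₀
    (contDiff_succ_of_hasDerivAt (n := 0) hd₁ (contDiff_zero.2 (by fun_prop)))

lemma contDiffOn_integral_G01_mul {ψ : ℝ → ℝ} (hψ : ContinuousOn ψ (Icc 0 1)) :
    ContDiffOn ℝ 2 (fun t => ∫ s in (0:ℝ)..1, G01 t s * ψ s) (Icc 0 1) := by
  set g := fun x => ψ (projIcc (0:ℝ) 1 zero_le_one x)
  have hg : Continuous g := hψ.comp_continuous (continuous_subtype_val.comp continuous_projIcc)
    fun x => (projIcc 0 1 zero_le_one x).2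
  refine (contDiff_two_integral_G01_mul_formula hg).contDiffOn.congr fun t ht => ?_
  rw [← integral_G01_mul_eq hg ht]
  refine intervalIntegral.integral_congr fun s hs => ?_
  rw [uIcc_of_le zero_le_one] at hs
  simp [g, projIcc_of_mem _ hs]

section Iteration

variable {f : ℝ → ℝ → ℝ → ℝ} {φ : ℝ → ℝ} {b1 b2 b3 : ℝ}

lemma contDiffOn_comp_of_contDiffOn_uncurry {n : WithTop ℕ∞} {s : Set ℝ} {a b : ℝ → ℝ}
    (hf : ContDiffOn ℝ n (fun p : ℝ × ℝ × ℝ => f p.1 p.2.1 p.2.2) (s ×ˢ univ ×ˢ univ))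
    (ha : ContDiffOn ℝ n a s) (hb : ContDiffOn ℝ n b s) :
    ContDiffOn ℝ n (fun t => f t (a t) (b t)) s :=
  hf.comp (contDiffOn_id.prodMk (ha.prodMk hb)) fun _ ht => ⟨ht, mem_univ _, mem_univ _⟩

lemma contDiffOn_uC {k : ℕ} (hψ : ContinuousOn (psiC f φ b1 b2 b3 k) (Icc 0 1)) :
    ContDiffOn ℝ 2 (uC f φ b1 b2 b3 k) (Icc 0 1) :=
  (by unfold gq; fun_prop : ContDiff ℝ 2 (gq b1 b2 b3)).contDiffOn.add
    (contDiffOn_integral_G01_mul hψ)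

lemma contDiffOn_psiC (hφ : ContDiffOn ℝ 2 φ (Icc 0 1)) (hφm : MapsTo φ (Icc 0 1) (Icc 0 1))
    (hf : ContDiffOn ℝ 2 (fun p : ℝ × ℝ × ℝ => f p.1 p.2.1 p.2.2)
      (Icc 0 1 ×ˢ (univ : Set ℝ) ×ˢ (univ : Set ℝ))) (k : ℕ) :
    ContDiffOn ℝ 2 (psiC f φ b1 b2 b3 k) (Icc 0 1) := by
  induction k with
  | zero => exact contDiffOn_comp_of_contDiffOn_uncurry hf contDiffOn_const contDiffOn_const
  | succ k ih =>
    have hu := contDiffOn_uC ih.continuousOn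
    exact contDiffOn_comp_of_contDiffOn_uncurry hf hu (hu.comp hφ hφm)

lemma abs_integral_G01_mul_sub_le {M0 : ℝ}
    (hM0 : ∀ t ∈ Icc (0:ℝ) 1, ∫ s in (0:ℝ)..1, |G01 t s| ≤ M0) {χ₁ χ₂ : ℝ → ℝ}
    (h₁ : ContinuousOn χ₁ (Icc 0 1)) (h₂ : ContinuousOn χ₂ (Icc 0 1)) {e : ℝ}
    (he : ∀ s ∈ Icc (0:ℝ) 1, |χ₁ s - χ₂ s| ≤ e) {t : ℝ} (ht : t ∈ Icc (0:ℝ) 1) :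
    |(∫ s in (0:ℝ)..1, G01 t s * χ₁ s) - ∫ s in (0:ℝ)..1, G01 t s * χ₂ s| ≤ M0 * e := by
  have he₀ : 0 ≤ e := (abs_nonneg _).trans (he 0 (left_mem_Icc.2 zero_le_one))
  have hi : ∀ χ : ℝ → ℝ, ContinuousOn χ (Icc 0 1) →
      IntervalIntegrable (fun s => G01 t s * χ s) volume 0 1 := fun χ hχ =>
    ((continuous_G01 t).continuousOn.mul hχ).intervalIntegrable_of_Icc zero_le_one
  rw [← intervalIntegral.integral_sub (hi _ h₁) (hi _ h₂)]
  calc _ ≤ ∫ s in (0:ℝ)..1, |G01 t s| * e := by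
        refine intervalIntegral.abs_integral_le_integral_abs zero_le_one |>.trans
          (intervalIntegral.integral_mono_on zero_le_one ((hi _ h₁).sub (hi _ h₂)).abs
            ((continuous_G01 t).abs.mul continuous_const |>.intervalIntegrable _ _) ?_)
        intro s hs
        rw [← mul_sub, abs_mul]
        exact mul_le_mul_of_nonneg_left (he s hs) (abs_nonneg _)
    _ = (∫ s in (0:ℝ)..1, |G01 t s|) * e := intervalIntegral.integral_mul_const _ _
    _ ≤ M0 * e := mul_le_mul_of_nonneg_right (hM0 t ht) he₀


variable {u : ℝ → ℝ} {L1 L2 M0 : ℝ}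

lemma abs_psiC_succ_sub_le (hφm : MapsTo φ (Icc 0 1) (Icc 0 1)) (hL1 : 0 ≤ L1) (hL2 : 0 ≤ L2)
    (hLip : ∀ t ∈ Icc (0:ℝ) 1, ∀ u1 u2 v1 v2 : ℝ,
      |f t u2 v2 - f t u1 v1| ≤ L1 * |u2 - u1| + L2 * |v2 - v1|)
    (hM0 : ∀ t ∈ Icc (0:ℝ) 1, ∫ s in (0:ℝ)..1, |G01 t s| ≤ M0)
    (hueq : ∀ t ∈ Icc (0:ℝ) 1,
      u t = gq b1 b2 b3 t + ∫ s in (0:ℝ)..1, G01 t s * f s (u s) (u (φ s)))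
    (hu : ContinuousOn (fun t => f t (u t) (u (φ t))) (Icc 0 1)) {k : ℕ}
    (hψ : ContinuousOn (psiC f φ b1 b2 b3 k) (Icc 0 1)) {e : ℝ}
    (he : ∀ s ∈ Icc (0:ℝ) 1, |psiC f φ b1 b2 b3 k s - f s (u s) (u (φ s))| ≤ e) :
    ∀ t ∈ Icc (0:ℝ) 1,
      |psiC f φ b1 b2 b3 (k + 1) t - f t (u t) (u (φ t))| ≤ (L1 + L2) * M0 * e := by
  have hdiff : ∀ x ∈ Icc (0:ℝ) 1, |uC f φ b1 b2 b3 k x - u x| ≤ M0 * e := fun x hx => by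
    rw [hueq x hx, uC, add_sub_add_left_eq_sub]
    exact abs_integral_G01_mul_sub_le hM0 hψ hu he hx
  intro t ht
  calc _ ≤ L1 * |uC f φ b1 b2 b3 k t - u t| + L2 * |uC f φ b1 b2 b3 k (φ t) - u (φ t)| :=
        hLip t ht _ _ _ _
    _ ≤ L1 * (M0 * e) + L2 * (M0 * e) := by
        gcongr
        exacts [hdiff t ht, hdiff _ (hφm ht)]
    _ = (L1 + L2) * M0 * e := by ring


lemma abs_psiC_sub_le_geometric (hφm : MapsTo φ (Icc 0 1) (Icc 0 1)) (hL1 : 0 ≤ L1)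
    (hL2 : 0 ≤ L2) (hLip : ∀ t ∈ Icc (0:ℝ) 1, ∀ u1 u2 v1 v2 : ℝ,
      |f t u2 v2 - f t u1 v1| ≤ L1 * |u2 - u1| + L2 * |v2 - v1|)
    (hM0 : ∀ t ∈ Icc (0:ℝ) 1, ∫ s in (0:ℝ)..1, |G01 t s| ≤ M0) (hq : (L1 + L2) * M0 < 1)
    (hueq : ∀ t ∈ Icc (0:ℝ) 1,
      u t = gq b1 b2 b3 t + ∫ s in (0:ℝ)..1, G01 t s * f s (u s) (u (φ s)))
    (hu : ContinuousOn (fun t => f t (u t) (u (φ t))) (Icc 0 1))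
    (hψ : ∀ k, ContinuousOn (psiC f φ b1 b2 b3 k) (Icc 0 1)) {d : ℝ}
    (hd : ∀ t ∈ Icc (0:ℝ) 1, |psiC f φ b1 b2 b3 1 t - psiC f φ b1 b2 b3 0 t| ≤ d) (k : ℕ) :
    ∀ t ∈ Icc (0:ℝ) 1, |psiC f φ b1 b2 b3 k t - f t (u t) (u (φ t))|
      ≤ ((L1 + L2) * M0) ^ k * (d / (1 - (L1 + L2) * M0)) := by
  have step := fun k e he => abs_psiC_succ_sub_le hφm hL1 hL2 hLip hM0 hueq hu (hψ k) (e := e) he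
  obtain ⟨t₀, ht₀, hmax⟩ := isCompact_Icc.exists_isMaxOn (nonempty_Icc.2 zero_le_one)
    ((hψ 0).sub hu).abs
  set m₀ := |psiC f φ b1 b2 b3 0 t₀ - f t₀ (u t₀) (u (φ t₀))|
  have h₀ : ∀ s ∈ Icc (0:ℝ) 1, |psiC f φ b1 b2 b3 0 s - f s (u s) (u (φ s))| ≤ m₀ :=
    fun s hs => hmax hs
  -- at a point of maximal initial error the first step moves by at most `d`
  have hm₀ : m₀ ≤ d / (1 - (L1 + L2) * M0) := by
    rw [le_div_iff₀ (sub_pos.2 hq)]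
    have h₁ : |psiC f φ b1 b2 b3 1 t₀ - f t₀ (u t₀) (u (φ t₀))| ≤ (L1 + L2) * M0 * m₀ :=
      step 0 m₀ h₀ t₀ ht₀
    have h₂ := abs_sub_le (psiC f φ b1 b2 b3 0 t₀) (psiC f φ b1 b2 b3 1 t₀) (f t₀ (u t₀) (u (φ t₀)))
    rw [abs_sub_comm (psiC f φ b1 b2 b3 0 t₀) (psiC f φ b1 b2 b3 1 t₀)] at h₂
    linarith [hd t₀ ht₀]
  induction k with
  | zero => simpa using fun t ht => (h₀ t ht).trans hm₀
  | succ k ih => exact fun t ht => (step k _ ih t ht).trans_eq (by ring)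

end Iteration

lemma natCast_div_mem_Icc {i N : ℕ} (hi : i ≤ N) : (i : ℝ) / N ∈ Icc (0:ℝ) 1 :=
  ⟨by positivity, div_le_one_of_le₀ (by exact_mod_cast hi) (Nat.cast_nonneg N)⟩

lemma exists_abs_trapSum_G01_mul_sub_integral_le_of_approx {ψ : ℝ → ℝ}
    (hψ : ContDiffOn ℝ 2 ψ (Icc 0 1)) {P : ℕ → ℕ → ℝ} {C : ℝ}
    (hP : ∀ N : ℕ, 0 < N → ∀ j ≤ N, |P N j - ψ (j / N)| ≤ C * (1 / N) ^ 2) :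
    ∃ C' : ℝ, ∀ N : ℕ, 0 < N → ∀ t ∈ Icc (0:ℝ) 1,
      |trapSum N (fun j => G01 t (j / N) * P N j) - ∫ s in (0:ℝ)..1, G01 t s * ψ s|
        ≤ C' * (1 / N) ^ 2 := by
  obtain ⟨C₀, hC₀⟩ := exists_abs_trapSum_G01_mul_sub_integral_le hψ
  refine ⟨C + C₀, fun N hN t ht => ?_⟩
  have hperturb : |trapSum N (fun j => G01 t (j / N) * P N j)
      - trapSum N (fun j => G01 t (j / N) * ψ (j / N))| ≤ C * (1 / N) ^ 2 := by
    rw [trapSum_sub]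
    refine abs_trapSum_le hN fun j hj => ?_
    rw [← mul_sub, abs_mul]
    exact (mul_le_of_le_one_left (abs_nonneg _) (abs_G01_le_one ht (natCast_div_mem_Icc hj))).trans
      (hP N hN j hj)
  calc _ ≤ C * (1 / N) ^ 2 + C₀ * (1 / N) ^ 2 :=
        (abs_sub_le _ _ _).trans (add_le_add hperturb (hC₀ N hN t ht))
    _ = (C + C₀) * (1 / N) ^ 2 := by ring

section Discrete

variable {f : ℝ → ℝ → ℝ → ℝ} {φ : ℝ → ℝ} {b1 b2 b3 : ℝ}

lemma UD_eq_trapSum (N k i : ℕ) : UD f φ b1 b2 b3 N k i =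
    gq b1 b2 b3 (i / N) + trapSum N (fun j => G01 (i / N) (j / N) * PsiD f φ b1 b2 b3 N k j) := by
  simp only [UD, trapSum, mul_assoc]

lemma VD_eq_trapSum (N k i : ℕ) : VD f φ b1 b2 b3 N k i = gq b1 b2 b3 (φ (i / N))
    + trapSum N (fun j => G01 (φ (i / N)) (j / N) * PsiD f φ b1 b2 b3 N k j) := by
  simp only [VD, trapSum, mul_assoc]

lemma exists_abs_PsiD_sub_psiC_le (hφ : ContDiffOn ℝ 2 φ (Icc 0 1))
    (hφm : MapsTo φ (Icc 0 1) (Icc 0 1))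
    (hf : ContDiffOn ℝ 2 (fun p : ℝ × ℝ × ℝ => f p.1 p.2.1 p.2.2)
      (Icc 0 1 ×ˢ (univ : Set ℝ) ×ˢ (univ : Set ℝ)))
    {L1 L2 : ℝ} (hL1 : 0 ≤ L1) (hL2 : 0 ≤ L2)
    (hLip : ∀ t ∈ Icc (0:ℝ) 1, ∀ u1 u2 v1 v2 : ℝ,
      |f t u2 v2 - f t u1 v1| ≤ L1 * |u2 - u1| + L2 * |v2 - v1|) (k : ℕ) :
    ∃ C : ℝ, ∀ N : ℕ, 0 < N → ∀ j ≤ N,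
      |PsiD f φ b1 b2 b3 N k j - psiC f φ b1 b2 b3 k (j / N)| ≤ C * (1 / N) ^ 2 := by
  induction k with
  | zero => exact ⟨0, fun N _ j _ => by simp [PsiD, psiC]⟩
  | succ k ih =>
    obtain ⟨C, hC⟩ := ih
    obtain ⟨C', hC'⟩ :=
      exists_abs_trapSum_G01_mul_sub_integral_le_of_approx (contDiffOn_psiC hφ hφm hf k) hC
    refine ⟨(L1 + L2) * C', fun N hN i hi => ?_⟩
    have ht := natCast_div_mem_Icc (N := N) hi
    calc _ ≤ L1 * |UD f φ b1 b2 b3 N k i - uC f φ b1 b2 b3 k (i / N)|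
          + L2 * |VD f φ b1 b2 b3 N k i - uC f φ b1 b2 b3 k (φ (i / N))| := hLip _ ht _ _ _ _
      _ ≤ L1 * (C' * (1 / N) ^ 2) + L2 * (C' * (1 / N) ^ 2) := by
          rw [UD_eq_trapSum, VD_eq_trapSum, uC, uC, add_sub_add_left_eq_sub,
            add_sub_add_left_eq_sub]
          gcongr
          exacts [hC' N hN _ ht, hC' N hN _ (hφm ht)]
      _ = (L1 + L2) * C' * (1 / N) ^ 2 := by ring

end Discrete

/-- Total error estimate: if moreover `q = (L1 + L2) M0 < 1` and `u` is the exact solution of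
the integral equation, then `max_i |U_k(t_i) − u(t_i)| ≤ M0 p_k d + C h²`, where
`p_k = q^k/(1−q)` and `d = ‖ψ₁ − ψ₀‖`. -/
theorem total_error_estimate
    (b1 b2 b3 : ℝ) (φ : ℝ → ℝ) (f : ℝ → ℝ → ℝ → ℝ)
    (hφ : ContDiffOn ℝ 2 φ (Icc 0 1)) (hφm : MapsTo φ (Icc 0 1) (Icc 0 1))
    (hf : ContDiffOn ℝ 2 (fun p : ℝ × ℝ × ℝ => f p.1 p.2.1 p.2.2)
      (Icc 0 1 ×ˢ (univ : Set ℝ) ×ˢ (univ : Set ℝ)))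
    (L1 L2 : ℝ) (hL1 : 0 ≤ L1) (hL2 : 0 ≤ L2)
    (hLip : ∀ t ∈ Icc (0:ℝ) 1, ∀ u1 u2 v1 v2 : ℝ,
      |f t u2 v2 - f t u1 v1| ≤ L1 * |u2 - u1| + L2 * |v2 - v1|)
    (M0 : ℝ) (hM0 : IsGreatest ((fun t => ∫ s in (0:ℝ)..1, |G01 t s|) '' Icc 0 1) M0)
    (hq : (L1 + L2) * M0 < 1)
    (u : ℝ → ℝ) (huc : ContinuousOn u (Icc 0 1))
    (hueq : ∀ t ∈ Icc (0:ℝ) 1,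
      u t = gq b1 b2 b3 t + ∫ s in (0:ℝ)..1, G01 t s * f s (u s) (u (φ s)))
    (d : ℝ)
    (hd : IsGreatest
      ((fun t => |psiC f φ b1 b2 b3 1 t - psiC f φ b1 b2 b3 0 t|) '' Icc 0 1) d) :
    ∀ k : ℕ, ∃ C > (0:ℝ), ∀ N : ℕ, 1 ≤ N → ∀ i : ℕ, i ≤ N →
      |UD f φ b1 b2 b3 N k i - u ((i : ℝ) / N)|
        ≤ M0 * (((L1 + L2) * M0) ^ k / (1 - (L1 + L2) * M0)) * d
          + C * (1 / (N:ℝ)) ^ 2 := by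
  intro k
  have hM0' : ∀ t ∈ Icc (0:ℝ) 1, ∫ s in (0:ℝ)..1, |G01 t s| ≤ M0 := fun t ht => hM0.2 ⟨t, ht, rfl⟩
  have hψ := contDiffOn_psiC (b1 := b1) (b2 := b2) (b3 := b3) hφ hφm hf
  have hu : ContinuousOn (fun t => f t (u t) (u (φ t))) (Icc 0 1) :=
    contDiffOn_comp_of_contDiffOn_uncurry (hf.of_le zero_le_two) (contDiffOn_zero.2 huc)
      (contDiffOn_zero.2 (huc.comp hφ.continuousOn hφm)) |>.continuousOn
  obtain ⟨C, hC⟩ :=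
    exists_abs_PsiD_sub_psiC_le (b1 := b1) (b2 := b2) (b3 := b3) hφ hφm hf hL1 hL2 hLip k
  obtain ⟨C', hC'⟩ := exists_abs_trapSum_G01_mul_sub_integral_le_of_approx (hψ k) hC
  refine ⟨|C'| + 1, by positivity, fun N hN i hi => ?_⟩
  have ht := natCast_div_mem_Icc (N := N) hi
  have hdisc : |UD f φ b1 b2 b3 N k i - uC f φ b1 b2 b3 k (i / N)| ≤ (|C'| + 1) * (1 / N) ^ 2 := by
    rw [UD_eq_trapSum, uC, add_sub_add_left_eq_sub]
    exact (hC' N hN _ ht).trans (by gcongr; linarith [le_abs_self C'])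
  have hcont : |uC f φ b1 b2 b3 k (i / N) - u (i / N)|
      ≤ M0 * (((L1 + L2) * M0) ^ k / (1 - (L1 + L2) * M0)) * d := by
    rw [hueq _ ht, uC, add_sub_add_left_eq_sub]
    refine (abs_integral_G01_mul_sub_le hM0' (hψ k).continuousOn hu
      (abs_psiC_sub_le_geometric hφm hL1 hL2 hLip hM0' hq hueq hu (fun k => (hψ k).continuousOn)
        (fun t ht => hd.2 ⟨t, ht, rfl⟩) k) ht).trans_eq ?_
    ring
  linarith [abs_sub_le (UD f φ b1 b2 b3 N k i) (uC f φ b1 b2 b3 k (i / N)) (u (i / N))]
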